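/- arXiv:1310.2397 — 3 statements merged into one kernel-verified Lean document; each statement's English description precedes it below -/
import Mathlib

section
/- Let T : 𝐇 ⇉ ℝ² be an H-monotone set-valued map with dom(T) = 𝐇. If for every λ > 0 and every g ∈ 𝐇 the map h ↦ ξ₁(h) + λT(h) restricted to the horizontal plane H_g is surjective onto ℝ², then T is maximal H-monotone. -/
/-!
A strict H-monotone extension `T'` of `T` would contain some `v₀ ∈ T' g₀ \ T g₀`. Surjectivity
of `ξ₁ + T` on `H_{g₀}` gives `h ∈ H_{g₀}` and `w ∈ T h` with `ξ₁ h + w = ξ₁ g₀ + v₀`; then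
H-monotonicity of `T'` yields `0 ≤ ⟨w - v₀, v₀ - w⟩ = -|w - v₀|²`, so `w = v₀`, hence
`ξ₁ h = ξ₁ g₀`, and as `ξ₁` is injective on horizontal planes, `h = g₀` and `v₀ ∈ T g₀`.
-/

/-- The Heisenberg group as a set: ℝ³. -/
abbrev Heis : Type := ℝ × ℝ × ℝ

/-- The first layer V₁ of the Lie algebra, identified with ℝ². -/
abbrev V2 : Type := ℝ × ℝ

/-- Heisenberg group law: (x,y,t)∘(x',y',t') = (x+x', y+y', t+t'+2(x'y−xy')). -/
def hmul (g g' : Heis) : Heis :=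
  (g.1 + g'.1, g.2.1 + g'.2.1, g.2.2 + g'.2.2 + 2 * (g'.1 * g.2.1 - g.1 * g'.2.1))

/-- Group inverse in the Heisenberg group. -/
def hinv (g : Heis) : Heis := (-g.1, -g.2.1, -g.2.2)

/-- Exponential of a horizontal vector: exp (a,b) = (a,b,0). -/
def hexp (w : V2) : Heis := (w.1, w.2, 0)

/-- Projection ξ₁ : 𝐇 → V₁, ξ₁(x,y,t) = (x,y). -/
def xi1 (g : Heis) : V2 := (g.1, g.2.1)

/-- Euclidean inner product on ℝ². -/
def dot (v w : V2) : ℝ := v.1 * w.1 + v.2 * w.2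

/-- Euclidean norm on ℝ². -/
noncomputable def nrm (v : V2) : ℝ := Real.sqrt (v.1 ^ 2 + v.2 ^ 2)

/-- The horizontal plane through g: H_g = {g ∘ exp w : w ∈ ℝ²}. -/
def hplane (g : Heis) : Set Heis := {h | ∃ w : V2, h = hmul g (hexp w)}

/-- H-monotonicity of a set-valued map T : 𝐇 ⇉ ℝ². -/
def HMonotone (T : Heis → Set V2) : Prop :=
  ∀ g g' : Heis, g' ∈ hplane g → ∀ v ∈ T g, ∀ v' ∈ T g',
    0 ≤ dot (v' - v) (xi1 g' - xi1 g)

/-- Maximal H-monotonicity: T is H-monotone and there is no H-monotone map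
strictly extending it. -/
def MaximalHMonotone (T : Heis → Set V2) : Prop :=
  HMonotone T ∧
    ¬ ∃ T' : Heis → Set V2, HMonotone T' ∧ (∀ g, T g ⊆ T' g) ∧ ∃ g, T g ⊂ T' g

/-- g₀, …, gₙ is a closed H-sequence: g_{i+1} ∈ H_{g_i} for i < n, and g₀ ∈ H_{gₙ}. -/
def IsClosedHSeq (n : ℕ) (g : ℕ → Heis) : Prop :=
  (∀ i < n, g (i + 1) ∈ hplane (g i)) ∧ g 0 ∈ hplane (g n)

/-- H-cyclic monotonicity: for every closed H-sequence g₀,…,gₙ (n ≥ 1), setting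
g_{n+1} = g₀, and every vᵢ ∈ T(gᵢ), ∑_{i=0}^{n} ⟨vᵢ, ξ₁(g_{i+1}) − ξ₁(gᵢ)⟩ ≤ 0. -/
def HCyclicallyMonotone (T : Heis → Set V2) : Prop :=
  ∀ n : ℕ, 1 ≤ n → ∀ g : ℕ → Heis, IsClosedHSeq n g →
    ∀ v : ℕ → V2, (∀ i ≤ n, v i ∈ T (g i)) →
      ∑ i ∈ Finset.range (n + 1),
        dot (v i) (xi1 (g ((i + 1) % (n + 1))) - xi1 (g i)) ≤ 0

/-- Maximal H-cyclic monotonicity. -/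
def MaximalHCyclicallyMonotone (T : Heis → Set V2) : Prop :=
  HCyclicallyMonotone T ∧
    ¬ ∃ T' : Heis → Set V2, HCyclicallyMonotone T' ∧ (∀ g, T g ⊆ T' g) ∧ ∃ g, T g ⊂ T' g

/-- H-convexity of u : 𝐇 → ℝ. -/
def HConvex (u : Heis → ℝ) : Prop :=
  ∀ g : Heis, ∀ w : V2, ∀ lam : ℝ, 0 ≤ lam → lam ≤ 1 →
    u (hmul g (hexp (lam • w))) ≤ u g + lam * (u (hmul g (hexp w)) - u g)

/-- The horizontal subdifferential ∂_H u (g). -/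
def Hsubdiff (u : Heis → ℝ) (g : Heis) : Set V2 :=
  {v | ∀ w : V2, u g + dot v w ≤ u (hmul g (hexp w))}

theorem xi1_hmul_hexp (g : Heis) (w : V2) : xi1 (hmul g (hexp w)) = xi1 g + w := by
  simp [xi1, hmul, hexp, Prod.ext_iff]

theorem eq_of_mem_hplane_of_xi1_eq {g h : Heis} (hh : h ∈ hplane g) (hxi : xi1 h = xi1 g) :
    h = g := by
  obtain ⟨w, rfl⟩ := hh
  have hw : w = 0 := by simpa [xi1_hmul_hexp] using hxi
  simp [hw, hmul, hexp]

theorem eq_of_dot_sub_sub_nonneg {a b : V2} (h : 0 ≤ dot (a - b) (b - a)) : a = b := by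
  obtain ⟨a₁, a₂⟩ := a
  obtain ⟨b₁, b₂⟩ := b
  simp only [dot, Prod.mk_sub_mk] at h
  have h₁ : a₁ = b₁ := by nlinarith [sq_nonneg (a₁ - b₁), sq_nonneg (a₂ - b₂)]
  have h₂ : a₂ = b₂ := by nlinarith [sq_nonneg (a₁ - b₁), sq_nonneg (a₂ - b₂)]
  rw [h₁, h₂]

theorem HMonotone.eq_of_xi1_add_eq {T : Heis → Set V2} (hT : HMonotone T) {g h : Heis}
    (hh : h ∈ hplane g) {v w : V2} (hv : v ∈ T g) (hw : w ∈ T h)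
    (heq : xi1 h + w = xi1 g + v) : h = g ∧ w = v := by
  have hxi : xi1 h - xi1 g = v - w := sub_eq_sub_iff_add_eq_add.mpr (heq.trans (add_comm _ _))
  have hwv : w = v := eq_of_dot_sub_sub_nonneg (hxi ▸ hT g h hh v hv w hw)
  subst hwv
  exact ⟨eq_of_mem_hplane_of_xi1_eq hh (add_right_cancel heq), rfl⟩

theorem HMonotone.subset_of_extends {T T' : Heis → Set V2} (hT' : HMonotone T')
    (hsub : ∀ g, T g ⊆ T' g)
    (hsurj : ∀ g : Heis, ∀ v : V2, ∃ h ∈ hplane g, ∃ w ∈ T h, xi1 h + w = v) (g : Heis) :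
    T' g ⊆ T g := by
  intro v hv
  obtain ⟨h, hh, w, hw, heq⟩ := hsurj g (xi1 g + v)
  obtain ⟨rfl, rfl⟩ := hT'.eq_of_xi1_add_eq hh hv (hsub h hw) heq
  exact hw

theorem stmt1_general (T : Heis → Set V2)
    (hmono : HMonotone T)
    (hsurj : ∀ lam : ℝ, 0 < lam → ∀ g : Heis, ∀ v : V2,
      ∃ h ∈ hplane g, ∃ w ∈ T h, xi1 h + lam • w = v) :
    MaximalHMonotone T := by
  refine ⟨hmono, ?_⟩
  rintro ⟨T', hT', hsub, g, hss⟩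
  have hsurj₁ : ∀ g : Heis, ∀ v : V2, ∃ h ∈ hplane g, ∃ w ∈ T h, xi1 h + w = v := by
    simpa only [one_smul] using hsurj 1 one_pos
  exact hss.not_subset (hT'.subset_of_extends hsub hsurj₁ g)

/-- if T is H-monotone with dom(T) = 𝐇 and ξ₁ + λT restricted to
every horizontal plane is surjective onto ℝ² for every λ > 0, then T is
maximal H-monotone. -/
theorem stmt1 (T : Heis → Set V2)
    (hmono : HMonotone T)
    (hdom : ∀ g : Heis, (T g).Nonempty)
    (hsurj : ∀ lam : ℝ, 0 < lam → ∀ g : Heis, ∀ v : V2,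
      ∃ h ∈ hplane g, ∃ w ∈ T h, xi1 h + lam • w = v) :
    MaximalHMonotone T :=
  stmt1_general T hmono hsurj
end

section
/- Let T : 𝐇 → ℝ² be a continuous (single-valued) map such that the set-valued map g ↦ {T(g)} is H-monotone. Then g ↦ {T(g)} is maximal H-monotone. -/
/-!
Minty's trick along horizontal lines: if `v ∈ T'(g)` for an H-monotone extension `T'`, then
testing monotonicity against the points `g ∘ exp (s • w)`, `s > 0`, and dividing by `s` gives
`⟨T(g ∘ exp (s • w)) - v, w⟩ ≥ 0`. Letting `s → 0⁺` and using continuity of `T`,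
`⟨T g - v, w⟩ ≥ 0` for every `w`, and `w = v - T g` forces `v = T g`.
-/

lemma xi1_hmul_hexp_sub (g : Heis) (w : V2) : xi1 (hmul g (hexp w)) - xi1 g = w := by
  simp [xi1, hmul, hexp]

lemma hmul_hexp_zero (g : Heis) : hmul g (hexp 0) = g := by
  simp [hmul, hexp]

lemma hmul_hexp_mem_hplane (g : Heis) (w : V2) : hmul g (hexp w) ∈ hplane g := ⟨w, rfl⟩

lemma dot_smul_right (v w : V2) (s : ℝ) : dot v (s • w) = s * dot v w := by
  simp only [dot, Prod.smul_fst, Prod.smul_snd, smul_eq_mul]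
  ring

lemma eq_zero_of_dot_neg_self_nonneg {u : V2} (h : 0 ≤ dot u (-u)) : u = 0 := by
  simp only [dot, Prod.fst_neg, Prod.snd_neg] at h
  ext <;> simp only [Prod.fst_zero, Prod.snd_zero] <;> nlinarith [sq_nonneg u.1, sq_nonneg u.2]

lemma continuous_hmul_hexp_smul (g : Heis) (w : V2) :
    Continuous fun s : ℝ => hmul g (hexp (s • w)) := by
  unfold hmul hexp
  fun_prop

lemma eq_of_forall_hplane_dot_nonneg {T : Heis → V2} {g : Heis} {v : V2}
    (hT : ContinuousAt T g)
    (hv : ∀ g' ∈ hplane g, 0 ≤ dot (T g' - v) (xi1 g' - xi1 g)) : v = T g := by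
  have hdir : ∀ w : V2, 0 ≤ dot (T g - v) w := by
    intro w
    set f : ℝ → ℝ := fun s => dot (T (hmul g (hexp (s • w))) - v) w
    have hf_pos : ∀ s > 0, 0 ≤ f s := by
      intro s hs
      have h := hv _ (hmul_hexp_mem_hplane g (s • w))
      rw [xi1_hmul_hexp_sub, dot_smul_right] at h
      exact nonneg_of_mul_nonneg_right h hs
    have hf_cont : ContinuousAt f 0 := by
      have hline : ContinuousAt (fun s : ℝ => T (hmul g (hexp (s • w)))) 0 := by
        refine ContinuousAt.comp (f := fun s : ℝ => hmul g (hexp (s • w))) ?_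
          (continuous_hmul_hexp_smul g w).continuousAt
        simpa only [zero_smul, hmul_hexp_zero] using hT
      have hdot : Continuous fun u : V2 => dot (u - v) w := by
        unfold dot
        fun_prop
      exact hdot.continuousAt.comp hline
    have hlim : 0 ≤ f 0 :=
      ge_of_tendsto (hf_cont.tendsto.mono_left (nhdsWithin_le_nhds (s := Set.Ioi 0)))
        (eventually_nhdsWithin_of_forall hf_pos)
    simpa only [f, zero_smul, hmul_hexp_zero] using hlim
  exact (sub_eq_zero.mp (eq_zero_of_dot_neg_self_nonneg (hdir _))).symm

/-- a continuous single-valued H-monotone map T : 𝐇 → ℝ² (with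
full domain) is maximal H-monotone. -/
theorem stmt5 (T : Heis → V2) (hcont : Continuous T)
    (hmono : HMonotone (fun g => ({T g} : Set V2))) :
    MaximalHMonotone (fun g => ({T g} : Set V2)) := by
  refine ⟨hmono, ?_⟩
  rintro ⟨T', hT'mono, hsub, g, hlt⟩
  have hT'_le : T' g ⊆ {T g} := fun v hv =>
    eq_of_forall_hplane_dot_nonneg hcont.continuousAt
      fun g' hg' => hT'mono g g' hg' v hv (T g') (hsub g' rfl)
  exact hlt.2 hT'_le
end

section
/- Let N : 𝐇 → ℝ be the gauge function N(x,y,t) = ((x² + y²)² + t²)^{1/4}, and let λ > 0. Then for every g = (x,y,1) ∈ 𝐇 with 0 < x² + y² ≤ λ²/(1+λ)², one has |ξ₁(g) + λv| ≤ λ for every v ∈ ∂_H N(g); hence ξ₁(g) + λ∂_H N(g) ⊆ ξ₁(e) + λ∂_H N(e), where e = (0,0,0). Consequently, there exist g'' ∈ 𝐇 and two distinct points g, g' ∈ H_{g''} such that (ξ₁(g) + λ∂_H N(g)) ∩ (ξ₁(g') + λ∂_H N(g')) ≠ ∅; in particular the set-valued map h ↦ ξ₁(h) + λ∂_H N(h)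 restricted to a horizontal plane need not have a single-valued inverse. -/
/-! `N` is the Korányi gauge, `N⁴ = ρ = (x² + y²)² + t²`. Where `ρ > 0` its horizontal
subdifferential is the single horizontal gradient `∇_H N = ρ^(-3/4) (r x + t y, r y - t x)`,
`r = x² + y²`: a subgradient equals the derivative along every horizontal line, and conversely the
subgradient inequality, raised to the fourth power, is two Cauchy–Schwarz inequalities.
At the origin `N (exp w) = |w|`, so `ξ₁(e) + λ ∂_H N(e)` is the closed disc of radius `λ`.
At `t = 1` one computes `|ξ₁ + λ ∇_H N|² = r + 2λ ρ^(-3/4) r² + λ² ρ^(-1/2) r ≤ (1 + λ)² r ≤ λ²`,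
so the image of `(x, y, 1)` lies in that disc. Since `e` and `(λ/(1+λ), 0, 1)` lie on a common
horizontal plane, their images meet. -/

lemma sq_dot_le (p q : V2) : dot p q ^ 2 ≤ dot p p * dot q q := by
  unfold dot; nlinarith [sq_nonneg (p.1 * q.2 - p.2 * q.1)]

lemma dot_le_nrm_mul_nrm (p q : V2) : dot p q ≤ nrm p * nrm q := by
  have h : dot p q ^ 2 ≤ (p.1 ^ 2 + p.2 ^ 2) * (q.1 ^ 2 + q.2 ^ 2) := by
    simpa only [dot, ← sq] using sq_dot_le p q
  calc dot p q ≤ |dot p q| := le_abs_self _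
    _ ≤ √((p.1 ^ 2 + p.2 ^ 2) * (q.1 ^ 2 + q.2 ^ 2)) := Real.abs_le_sqrt h
    _ = nrm p * nrm q := Real.sqrt_mul (by positivity) _

lemma mem_hplane_iff {g h : Heis} :
    h ∈ hplane g ↔ h.2.2 = g.2.2 + 2 * (h.1 * g.2.1 - g.1 * h.2.1) := by
  constructor
  · rintro ⟨w, rfl⟩
    simp only [hmul, hexp]; ring
  · intro ht
    refine ⟨(h.1 - g.1, h.2.1 - g.2.1), ?_⟩
    simp only [hmul, hexp, Prod.ext_iff]
    refine ⟨by ring, by ring, ?_⟩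
    rw [ht]; ring

/-- Along a horizontal line on which `u` is differentiable, a subgradient is the derivative:
`s ↦ u (g ∘ exp (s • w)) - s ⟪v, w⟫` has a global minimum at `0`. -/
lemma dot_eq_of_mem_Hsubdiff {u : Heis → ℝ} {g : Heis} {v w : V2} {D : ℝ}
    (hv : v ∈ Hsubdiff u g) (hD : HasDerivAt (fun s : ℝ => u (hmul g (hexp (s • w)))) D 0) :
    dot v w = D := by
  have hmin : IsLocalMin (fun s : ℝ => u (hmul g (hexp (s • w))) - s * dot v w) 0 := by
    refine Filter.Eventually.of_forall fun s => ?_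
    have h := hv (s • w)
    simp only [zero_smul, hmul_hexp_zero, zero_mul, sub_zero]
    simp only [dot, Prod.smul_fst, Prod.smul_snd, smul_eq_mul] at h ⊢
    linarith
  have h := hmin.hasDerivAt_eq_zero (hD.sub ((hasDerivAt_id (0 : ℝ)).mul_const (dot v w)))
  simp only [one_mul] at h
  linarith

def koranyiQuartic (g : Heis) : ℝ := (g.1 ^ 2 + g.2.1 ^ 2) ^ 2 + g.2.2 ^ 2

noncomputable def koranyi (g : Heis) : ℝ := koranyiQuartic g ^ ((1 : ℝ) / 4)

/-- A quarter of the horizontal gradient `(Xρ, Yρ)` of `ρ = koranyiQuartic`. -/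
def quarticHGrad (g : Heis) : V2 :=
  ((g.1 ^ 2 + g.2.1 ^ 2) * g.1 + g.2.2 * g.2.1, (g.1 ^ 2 + g.2.1 ^ 2) * g.2.1 - g.2.2 * g.1)

/-- The horizontal gradient of `N = ρ^(1/4)`, written with `N / ρ = ρ^(-3/4)`. -/
noncomputable def koranyiHGrad (g : Heis) : V2 := (koranyi g / koranyiQuartic g) • quarticHGrad g

lemma koranyiQuartic_nonneg (g : Heis) : 0 ≤ koranyiQuartic g := by
  unfold koranyiQuartic; positivity

lemma koranyi_pow_four (g : Heis) : koranyi g ^ 4 = koranyiQuartic g := by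
  rw [koranyi, show (1 : ℝ) / 4 = ((4 : ℕ) : ℝ)⁻¹ by norm_num]
  exact Real.rpow_inv_natCast_pow (koranyiQuartic_nonneg g) four_ne_zero

lemma koranyi_pos {g : Heis} (hg : 0 < koranyiQuartic g) : 0 < koranyi g :=
  Real.rpow_pos_of_pos hg _

lemma koranyi_hexp (w : V2) : koranyi (hexp w) = nrm w := by
  have h : koranyiQuartic (hexp w) = (w.1 ^ 2 + w.2 ^ 2) ^ (2 : ℝ) := by
    simp [koranyiQuartic, hexp]
  rw [koranyi, h, ← Real.rpow_mul (by positivity), nrm, Real.sqrt_eq_rpow]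
  norm_num

lemma hasDerivAt_koranyiQuartic_line (g : Heis) (w : V2) :
    HasDerivAt (fun s : ℝ => koranyiQuartic (hmul g (hexp (s • w))))
      (4 * dot (quarticHGrad g) w) 0 := by
  obtain ⟨x, y, t⟩ := g
  have line : ∀ c d : ℝ, HasDerivAt (fun s : ℝ => c + s * d) d 0 := fun c d => by
    simpa using (hasDerivAt_mul_const d).const_add c
  have h := (((line x w.1).pow 2).add ((line y w.2).pow 2)).pow 2 |>.add
    ((line t (2 * (w.1 * y - x * w.2))).pow 2)
  have hf : (fun s : ℝ => koranyiQuartic (hmul (x, y, t) (hexp (s • w)))) =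
      fun s => ((x + s * w.1) ^ 2 + (y + s * w.2) ^ 2) ^ 2 +
        (t + s * (2 * (w.1 * y - x * w.2))) ^ 2 := by
    funext s
    simp only [koranyiQuartic, hmul, hexp, Prod.smul_fst, Prod.smul_snd, smul_eq_mul]
    ring
  rw [hf]
  refine h.congr_deriv ?_
  simp only [quarticHGrad, dot]
  norm_num
  ring

lemma dot_smul_left (c : ℝ) (p w : V2) : dot (c • p) w = c * dot p w := by
  simp only [dot, Prod.smul_fst, Prod.smul_snd, smul_eq_mul]; ring

lemma hasDerivAt_koranyi_line {g : Heis} (hg : 0 < koranyiQuartic g) (w : V2) :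
    HasDerivAt (fun s : ℝ => koranyi (hmul g (hexp (s • w)))) (dot (koranyiHGrad g) w) 0 := by
  have hρ : koranyiQuartic (hmul g (hexp ((0 : ℝ) • w))) = koranyiQuartic g := by
    rw [zero_smul, hmul_hexp_zero]
  have h := (Real.hasDerivAt_rpow_const (p := (1 : ℝ) / 4) (Or.inl (hρ ▸ hg.ne'))).comp 0
    (hasDerivAt_koranyiQuartic_line g w)
  refine h.congr_deriv ?_
  rw [hρ, Real.rpow_sub_one hg.ne', koranyiHGrad, dot_smul_left, koranyi]
  ring

lemma eq_koranyiHGrad_of_mem_Hsubdiff {g : Heis} (hg : 0 < koranyiQuartic g) {v : V2}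
    (hv : v ∈ Hsubdiff koranyi g) : v = koranyiHGrad g := by
  have h₁ := dot_eq_of_mem_Hsubdiff hv (hasDerivAt_koranyi_line hg (1, 0))
  have h₂ := dot_eq_of_mem_Hsubdiff hv (hasDerivAt_koranyi_line hg (0, 1))
  simp only [dot, mul_one, mul_zero, add_zero, zero_add] at h₁ h₂
  exact Prod.ext h₁ h₂

/-- Cauchy–Schwarz twice: `(ρ + L)² ≤ ρ M` and `M² ≤ ρ ρ'`, where `L = ⟪quarticHGrad g, w⟫`,
`ρ' = ρ (g ∘ exp w)` and `M = ρ + 2L + |ξ₁ g|² |w|²` is the inner product of `(|ξ₁ g|², t)`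
with `(|ξ₁ (g ∘ exp w)|², t')`, `t, t'` the last coordinates of `g, g ∘ exp w`. -/
lemma add_dot_quarticHGrad_pow_four_le (g : Heis) (w : V2) :
    (koranyiQuartic g + dot (quarticHGrad g) w) ^ 4 ≤
      koranyiQuartic g ^ 3 * koranyiQuartic (hmul g (hexp w)) := by
  obtain ⟨x, y, t⟩ := g
  obtain ⟨a, b⟩ := w
  set ρ := koranyiQuartic (x, y, t)
  set L := dot (quarticHGrad (x, y, t)) (a, b)
  set M := ρ + 2 * L + (x ^ 2 + y ^ 2) * dot (a, b) (a, b)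
  have h₁ : (ρ + L) ^ 2 ≤ ρ * M := by
    have hq : dot (quarticHGrad (x, y, t)) (quarticHGrad (x, y, t)) = ρ * (x ^ 2 + y ^ 2) := by
      simp only [dot, quarticHGrad, ρ, koranyiQuartic]; ring
    have := sq_dot_le (quarticHGrad (x, y, t)) (a, b)
    rw [hq] at this
    linear_combination this
  have h₂ : M ^ 2 ≤ ρ * koranyiQuartic (hmul (x, y, t) (hexp (a, b))) := by
    have := sq_dot_le (x ^ 2 + y ^ 2, t) ((x + a) ^ 2 + (y + b) ^ 2, t + 2 * (a * y - x * b))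
    convert this using 2
    · simp only [M, L, ρ, dot, quarticHGrad, koranyiQuartic]; ring
    · simp only [ρ, dot, koranyiQuartic]; ring
    · simp only [dot, koranyiQuartic, hmul, hexp]; ring
  calc (ρ + L) ^ 4 = ((ρ + L) ^ 2) ^ 2 := by ring
    _ ≤ (ρ * M) ^ 2 := pow_le_pow_left₀ (sq_nonneg _) h₁ 2
    _ = ρ ^ 2 * M ^ 2 := by ring
    _ ≤ ρ ^ 2 * (ρ * koranyiQuartic (hmul (x, y, t) (hexp (a, b)))) :=
      mul_le_mul_of_nonneg_left h₂ (sq_nonneg ρ)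
    _ = _ := by ring

lemma le_rpow_quarter_of_pow_four_le {a b : ℝ} (hb : 0 ≤ b) (h : a ^ 4 ≤ b) :
    a ≤ b ^ ((1 : ℝ) / 4) := by
  rcases le_or_gt a 0 with ha | ha
  · exact ha.trans (Real.rpow_nonneg hb _)
  · calc a = (a ^ 4) ^ ((1 : ℝ) / 4) := by
          rw [show (1 : ℝ) / 4 = ((4 : ℕ) : ℝ)⁻¹ by norm_num,
            Real.pow_rpow_inv_natCast ha.le four_ne_zero]
      _ ≤ b ^ ((1 : ℝ) / 4) := Real.rpow_le_rpow (by positivity) h (by norm_num)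

lemma koranyiHGrad_mem_Hsubdiff {g : Heis} (hg : 0 < koranyiQuartic g) :
    koranyiHGrad g ∈ Hsubdiff koranyi g := by
  intro w
  have hN : koranyi g + dot (koranyiHGrad g) w =
      koranyi g / koranyiQuartic g * (koranyiQuartic g + dot (quarticHGrad g) w) := by
    rw [koranyiHGrad, dot_smul_left]; field_simp
  rw [hN]
  refine le_rpow_quarter_of_pow_four_le (koranyiQuartic_nonneg _) ?_
  rw [mul_pow, div_pow, koranyi_pow_four, div_mul_eq_mul_div, div_le_iff₀ (by positivity)]
  calc koranyiQuartic g * (koranyiQuartic g + dot (quarticHGrad g) w) ^ 4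
      ≤ koranyiQuartic g * (koranyiQuartic g ^ 3 * koranyiQuartic (hmul g (hexp w))) :=
        mul_le_mul_of_nonneg_left (add_dot_quarticHGrad_pow_four_le g w) hg.le
    _ = _ := by ring

lemma Hsubdiff_koranyi {g : Heis} (hg : 0 < koranyiQuartic g) :
    Hsubdiff koranyi g = {koranyiHGrad g} :=
  Set.eq_singleton_iff_unique_mem.2
    ⟨koranyiHGrad_mem_Hsubdiff hg, fun _ hv => eq_koranyiHGrad_of_mem_Hsubdiff hg hv⟩

lemma nrm_smul (c : ℝ) (p : V2) : nrm (c • p) = |c| * nrm p := by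
  simp only [nrm, Prod.smul_fst, Prod.smul_snd, smul_eq_mul, mul_pow, ← mul_add]
  rw [Real.sqrt_mul (sq_nonneg c), Real.sqrt_sq_eq_abs]

lemma koranyi_zero : koranyi ((0 : ℝ), (0 : ℝ), (0 : ℝ)) = 0 := by
  simp [koranyi, koranyiQuartic]

lemma mem_Hsubdiff_koranyi_zero {v : V2} (hv : nrm v ≤ 1) :
    v ∈ Hsubdiff koranyi ((0 : ℝ), (0 : ℝ), (0 : ℝ)) := by
  intro w
  have h₀ : hmul ((0 : ℝ), (0 : ℝ), (0 : ℝ)) (hexp w) = hexp w := by simp [hmul, hexp]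
  rw [h₀, koranyi_hexp, koranyi_zero, zero_add]
  calc dot v w ≤ nrm v * nrm w := dot_le_nrm_mul_nrm v w
    _ ≤ 1 * nrm w := mul_le_mul_of_nonneg_right hv (Real.sqrt_nonneg _)
    _ = nrm w := one_mul _

lemma mem_image_Hsubdiff_koranyi_zero {lam : ℝ} (hlam : 0 < lam) {p : V2} (hp : nrm p ≤ lam) :
    ∃ v ∈ Hsubdiff koranyi ((0 : ℝ), (0 : ℝ), (0 : ℝ)),
      p = xi1 ((0 : ℝ), (0 : ℝ), (0 : ℝ)) + lam • v := by
  refine ⟨lam⁻¹ • p, mem_Hsubdiff_koranyi_zero ?_, ?_⟩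
  · rw [nrm_smul, abs_inv, abs_of_pos hlam, inv_mul_le_one₀ hlam]
    exact hp
  · rw [smul_inv_smul₀ hlam.ne']
    simp [xi1]

lemma nrm_xi1_add_smul_koranyiHGrad_le {x y lam : ℝ} (hlam : 0 ≤ lam)
    (hr : x ^ 2 + y ^ 2 ≤ lam ^ 2 / (1 + lam) ^ 2) :
    nrm (xi1 (x, y, (1 : ℝ)) + lam • koranyiHGrad (x, y, (1 : ℝ))) ≤ lam := by
  set r := x ^ 2 + y ^ 2
  set n := koranyi (x, y, (1 : ℝ))
  have hρ : koranyiQuartic (x, y, (1 : ℝ)) = r ^ 2 + 1 := by simp [koranyiQuartic, r]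
  have hn4 : n ^ 4 = r ^ 2 + 1 := (koranyi_pow_four _).trans hρ
  have hn : 0 < n := koranyi_pos (by rw [hρ]; positivity)
  have hn1 : 1 ≤ n := by
    by_contra! h
    nlinarith [pow_lt_one₀ hn.le h four_ne_zero, sq_nonneg r]
  have hr0 : 0 ≤ r := by positivity
  have hr1 : r * (1 + lam) ^ 2 ≤ lam ^ 2 := (le_div_iff₀ (by positivity)).1 hr
  have hr2 : r ≤ 1 := by nlinarith
  set A := n / (r ^ 2 + 1)
  have hA : A ≤ 1 := by
    refine (div_le_one (by positivity)).2 ?_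
    rw [← hn4]; nlinarith [pow_le_pow_right₀ hn1 (show 1 ≤ 4 by norm_num)]
  have hA2 : A ^ 2 * (r ^ 2 + 1) ≤ 1 := by
    rw [div_pow, div_mul_eq_mul_div, div_le_one (by positivity), ← hn4]
    nlinarith [mul_le_mul_of_nonneg_right (pow_le_pow_right₀ hn1 (show 2 ≤ 4 by norm_num))
      (pow_nonneg hn.le 4)]
  have hv : xi1 (x, y, (1 : ℝ)) + lam • koranyiHGrad (x, y, (1 : ℝ))
      = (x + lam * (A * (r * x + y)), y + lam * (A * (r * y - x))) := by
    simp only [xi1, koranyiHGrad, quarticHGrad, hρ, Prod.ext_iff, Prod.fst_add, Prod.snd_add,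
      Prod.smul_fst, Prod.smul_snd, smul_eq_mul, A, n, r]
    constructor <;> ring
  have hsq : (x + lam * (A * (r * x + y))) ^ 2 + (y + lam * (A * (r * y - x))) ^ 2
      = r + 2 * lam * (A * r ^ 2) + lam ^ 2 * (A ^ 2 * (r ^ 2 + 1) * r) := by
    simp only [r]; ring
  have hAr : A * r ^ 2 ≤ r := by nlinarith [mul_le_mul_of_nonneg_right hA (sq_nonneg r)]
  rw [hv, nrm, Real.sqrt_le_left hlam, hsq]
  calc r + 2 * lam * (A * r ^ 2) + lam ^ 2 * (A ^ 2 * (r ^ 2 + 1) * r)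
      ≤ r + 2 * lam * r + lam ^ 2 * (1 * r) := by gcongr
    _ = r * (1 + lam) ^ 2 := by ring
    _ ≤ lam ^ 2 := hr1

lemma nrm_xi1_add_smul_le_of_mem_Hsubdiff_koranyi {x y lam : ℝ} (hlam : 0 ≤ lam)
    (hr : x ^ 2 + y ^ 2 ≤ lam ^ 2 / (1 + lam) ^ 2) {v : V2}
    (hv : v ∈ Hsubdiff koranyi (x, y, (1 : ℝ))) :
    nrm (xi1 (x, y, (1 : ℝ)) + lam • v) ≤ lam := by
  rw [Hsubdiff_koranyi (by unfold koranyiQuartic; positivity), Set.mem_singleton_iff] at hv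
  rw [hv]
  exact nrm_xi1_add_smul_koranyiHGrad_le hlam hr

/-- for the gauge N and λ > 0, at points g = (x,y,1) with
0 < x²+y² ≤ λ²/(1+λ)² one has |ξ₁(g) + λv| ≤ λ for all v ∈ ∂_H N(g), hence
ξ₁(g) + λ∂_H N(g) ⊆ ξ₁(e) + λ∂_H N(e); consequently two distinct points of a
common horizontal plane have intersecting images under ξ₁ + λ∂_H N. -/
theorem stmt17 (N : Heis → ℝ)
    (hN : ∀ x y t : ℝ, N (x, y, t) = ((x ^ 2 + y ^ 2) ^ 2 + t ^ 2) ^ ((1:ℝ) / 4))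
    (lam : ℝ) (hlam : 0 < lam) :
    (∀ x y : ℝ, 0 < x ^ 2 + y ^ 2 → x ^ 2 + y ^ 2 ≤ lam ^ 2 / (1 + lam) ^ 2 →
      (∀ v ∈ Hsubdiff N (x, y, (1:ℝ)), nrm (xi1 (x, y, (1:ℝ)) + lam • v) ≤ lam) ∧
      {p : V2 | ∃ v ∈ Hsubdiff N (x, y, (1:ℝ)), p = xi1 (x, y, (1:ℝ)) + lam • v} ⊆
        {p : V2 | ∃ v ∈ Hsubdiff N ((0:ℝ), (0:ℝ), (0:ℝ)),
          p = xi1 ((0:ℝ), (0:ℝ), (0:ℝ)) + lam • v}) ∧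
    (∃ g'' g g' : Heis, g ∈ hplane g'' ∧ g' ∈ hplane g'' ∧ g ≠ g' ∧
      ({p : V2 | ∃ v ∈ Hsubdiff N g, p = xi1 g + lam • v} ∩
        {p : V2 | ∃ v ∈ Hsubdiff N g', p = xi1 g' + lam • v}).Nonempty) := by
  obtain rfl : N = koranyi := funext fun g => hN g.1 g.2.1 g.2.2
  refine ⟨fun x y _ hr => ⟨fun v hv => nrm_xi1_add_smul_le_of_mem_Hsubdiff_koranyi hlam.le hr hv,
    ?_⟩, ?_⟩
  · rintro _ ⟨v, hv, rfl⟩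
    exact mem_image_Hsubdiff_koranyi_zero hlam
      (nrm_xi1_add_smul_le_of_mem_Hsubdiff_koranyi hlam.le hr hv)
  set x₀ := lam / (1 + lam)
  have hx₀ : 0 < x₀ := by positivity
  have hgrad : koranyiHGrad (x₀, 0, 1) ∈ Hsubdiff koranyi (x₀, 0, 1) :=
    koranyiHGrad_mem_Hsubdiff (by unfold koranyiQuartic; positivity)
  refine ⟨(0, 1 / (2 * x₀), 0), (x₀, 0, 1), (0, 0, 0), mem_hplane_iff.2 ?_, mem_hplane_iff.2 ?_,
    by simp, ⟨_, ⟨_, hgrad, rfl⟩, mem_image_Hsubdiff_koranyi_zero hlam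
      (nrm_xi1_add_smul_koranyiHGrad_le hlam.le ?_)⟩⟩
  · norm_num [hx₀.ne']
  · simp
  · simp [x₀, div_pow]
end
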